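/- arXiv:1506.01788 — 2 statements merged into one kernel-verified Lean document; each statement's English description precedes it below -/
import Mathlib

section
/- Let H be a complex Hilbert space, let (φ_j)_{j∈ι} be a Hilbert basis of H, and let T be a compact linear operator on H with T φ_j = λ_j φ_j for every j, where λ_j ∈ ℂ. Let S be a compact linear operator on H with ‖T − S‖ > 0. Then the spectrum of S is contained in the union of the open balls of radius 2‖T − S‖ centered at the eigenvalues: σ(S) ⊆ ⋃_{j∈ι} { z ∈ ℂ : |z − λ_j| < 2‖T − S‖ }. (Theorem 4.6 of the paper, stated abstractly: σ(T_t) ⊂ ⋃_n B(λ_n, 2‖T − T_t‖).) -/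
/-!
Let `ε = ‖T - S‖` and suppose `‖z - λ_j‖ ≥ 2ε` for every `j`. The operator `z - T` is diagonal in
the basis `φ` with entries of modulus at least `2ε`, so by Parseval both it and its adjoint are
bounded below by `2ε`; hence `z - T` is invertible with `‖(z - T)⁻¹‖ ≤ 1 / (2ε)`. Then
`z - S = (z - T) + (T - S)` is a perturbation of norm `ε < 1 / ‖(z - T)⁻¹‖` of an invertible
operator, hence invertible by the Neumann series, i.e. `z ∉ σ(S)`.
-/

open scoped InnerProductSpace ComplexConjugate

namespace ContinuousLinearMap

theorem isUnit_add_of_norm_lt {𝕜 E : Type*} [NontriviallyNormedField 𝕜]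
    [NormedAddCommGroup E] [NormedSpace 𝕜 E] [CompleteSpace E] {A C : E →L[𝕜] E} {c : ℝ}
    (hA : IsUnit A) (hA_bound : ∀ x, c * ‖x‖ ≤ ‖A x‖) (hC : ‖C‖ < c) : IsUnit (A + C) := by
  rcases subsingleton_or_nontrivial (E →L[𝕜] E) with _ | _
  · exact isUnit_of_subsingleton _
  obtain ⟨u, rfl⟩ := hA
  have hc : 0 < c := (norm_nonneg C).trans_lt hC
  have hinv : ‖(↑u⁻¹ : E →L[𝕜] E)‖ ≤ c⁻¹ := by
    refine opNorm_le_bound _ (inv_nonneg.mpr hc.le) fun y => ?_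
    have hy := hA_bound ((↑u⁻¹ : E →L[𝕜] E) y)
    rw [← mul_apply_eq_comp, u.mul_inv, one_apply_eq_self] at hy
    rwa [inv_mul_eq_div, le_div_iff₀ hc, mul_comm]
  have hC' : ‖C‖ < ‖(↑u⁻¹ : E →L[𝕜] E)‖⁻¹ :=
    hC.trans_le ((inv_inv c).symm ▸ inv_anti₀ (norm_pos_iff.mpr u⁻¹.ne_zero) hinv)
  exact (u.val_add C hC') ▸ (u.add C hC').isUnit

theorem isUnit_of_bound_of_injective_adjoint {𝕜 E : Type*} [RCLike 𝕜] [NormedAddCommGroup E]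
    [InnerProductSpace 𝕜 E] [CompleteSpace E] {A : E →L[𝕜] E} {c : ℝ} (hc : 0 < c)
    (hA : ∀ x, c * ‖x‖ ≤ ‖A x‖) (hA' : Function.Injective (adjoint A)) : IsUnit A := by
  rw [isUnit_iff_bijective, bijective_iff_dense_range_and_antilipschitz]
  refine ⟨?_, c.toNNReal⁻¹, A.antilipschitz_of_bound fun x => ?_⟩
  · rw [Submodule.topologicalClosure_eq_top_iff, orthogonal_range, LinearMap.ker_eq_bot]
    exact hA'
  · rw [NNReal.coe_inv, Real.coe_toNNReal _ hc.le, inv_mul_eq_div, le_div_iff₀ hc, mul_comm]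
    exact hA x

end ContinuousLinearMap

namespace HilbertBasis

variable {𝕜 E ι : Type*} [RCLike 𝕜] [NormedAddCommGroup E] [InnerProductSpace 𝕜 E]

theorem hasSum_norm_inner_sq (b : HilbertBasis ι 𝕜 E) (x : E) :
    HasSum (fun i => ‖⟪b i, x⟫_𝕜‖ ^ 2) (‖x‖ ^ 2) := by
  rw [← RCLike.hasSum_ofReal 𝕜]
  push_cast
  simp_rw [← RCLike.conj_mul, inner_conj_symm, ← inner_self_eq_norm_sq_to_K]
  exact b.hasSum_inner_mul_inner x x

variable {b : HilbertBasis ι 𝕜 E} {A : E →L[𝕜] E} {μ : ι → 𝕜}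

theorem inner_apply_of_apply_eq_smul (hA : ∀ i, A (b i) = μ i • b i) (i : ι) (x : E) :
    ⟪b i, A x⟫_𝕜 = μ i * ⟪b i, x⟫_𝕜 := by
  suffices (innerSL 𝕜 (b i)).comp A = μ i • innerSL 𝕜 (b i) from
    congr($this x)
  refine ContinuousLinearMap.ext_on
    (Submodule.dense_iff_topologicalClosure_eq_top.mpr b.dense_span) ?_
  rintro - ⟨k, rfl⟩
  by_cases hik : i = k
  · subst hik
    simp [hA]
  · simp [hA, b.orthonormal.inner_eq_zero hik]

theorem adjoint_apply_of_apply_eq_smul [CompleteSpace E] (hA : ∀ i, A (b i) = μ i • b i)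
    (i : ι) : ContinuousLinearMap.adjoint A (b i) = conj (μ i) • b i :=
  ext_inner_right 𝕜 fun x => by
    rw [ContinuousLinearMap.adjoint_inner_left, inner_apply_of_apply_eq_smul hA, inner_smul_left,
      RCLike.conj_conj]

theorem mul_norm_le_norm_apply_of_apply_eq_smul (hA : ∀ i, A (b i) = μ i • b i) {c : ℝ}
    (hc : 0 ≤ c) (hμ : ∀ i, c ≤ ‖μ i‖) (x : E) : c * ‖x‖ ≤ ‖A x‖ := by
  have hsq : (c * ‖x‖) ^ 2 ≤ ‖A x‖ ^ 2 := by
    rw [mul_pow]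
    refine hasSum_le (fun i => ?_) ((b.hasSum_norm_inner_sq x).mul_left (c ^ 2))
      (b.hasSum_norm_inner_sq (A x))
    rw [inner_apply_of_apply_eq_smul hA, norm_mul, mul_pow]
    gcongr
    exact hμ i
  exact (pow_le_pow_iff_left₀ (by positivity) (norm_nonneg _) two_ne_zero).mp hsq

theorem isUnit_of_apply_eq_smul [CompleteSpace E] (hA : ∀ i, A (b i) = μ i • b i) {c : ℝ}
    (hc : 0 < c) (hμ : ∀ i, c ≤ ‖μ i‖) : IsUnit A := by
  have hA_adjoint_bound := mul_norm_le_norm_apply_of_apply_eq_smul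
    (adjoint_apply_of_apply_eq_smul hA) hc.le fun i => (RCLike.norm_conj (μ i)).symm ▸ hμ i
  refine ContinuousLinearMap.isUnit_of_bound_of_injective_adjoint hc
    (mul_norm_le_norm_apply_of_apply_eq_smul hA hc.le hμ)
    ((injective_iff_map_eq_zero _).mpr fun x hx => ?_)
  have hx_bound := hA_adjoint_bound x
  rw [hx, norm_zero] at hx_bound
  exact norm_le_zero_iff.mp ((mul_nonpos_iff_pos_imp_nonpos.mp hx_bound).1 hc)

end HilbertBasis

theorem spectrum_subset_union_balls_general
    {H : Type*} [NormedAddCommGroup H] [InnerProductSpace ℂ H] [CompleteSpace H]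
    {ι : Type*} (φ : HilbertBasis ι ℂ H)
    (T : H →L[ℂ] H)
    (l : ι → ℂ) (hT : ∀ j, T (φ j) = l j • φ j)
    (S : H →L[ℂ] H)
    (hpos : 0 < ‖T - S‖) :
    spectrum ℂ S ⊆ ⋃ j, {z : ℂ | ‖z - l j‖ < 2 * ‖T - S‖} := by
  intro z hz
  by_contra hz_far
  simp only [Set.mem_iUnion, Set.mem_ofPred_eq, not_exists, not_lt] at hz_far
  set B := algebraMap ℂ (H →L[ℂ] H) z - T
  have hB : ∀ j, B (φ j) = (z - l j) • φ j := fun j => by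
    simp [B, hT, sub_smul, Algebra.algebraMap_eq_smul_one]
  have hB_unit : IsUnit B := φ.isUnit_of_apply_eq_smul hB (by positivity) hz_far
  have hB_bound := φ.mul_norm_le_norm_apply_of_apply_eq_smul hB (by positivity) hz_far
  have hB_add_unit : IsUnit (B + (T - S)) :=
    ContinuousLinearMap.isUnit_add_of_norm_lt hB_unit hB_bound (by linarith)
  exact spectrum.mem_iff.mp hz (by rwa [sub_add_sub_cancel] at hB_add_unit)

/-- Theorem 4.6 (abstract form): if `T` is a compact operator diagonalized by a Hilbert
basis with eigenvalues `λ_j` and `S` is a compact operator with `‖T - S‖ > 0`, then the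
spectrum of `S` is contained in the union of the open balls `B(λ_j, 2‖T - S‖)`. -/
theorem spectrum_subset_union_balls
    {H : Type*} [NormedAddCommGroup H] [InnerProductSpace ℂ H] [CompleteSpace H]
    {ι : Type*} [Nonempty ι] (φ : HilbertBasis ι ℂ H)
    (T : H →L[ℂ] H) (hTc : IsCompactOperator (⇑T))
    (l : ι → ℂ) (hT : ∀ j, T (φ j) = l j • φ j)
    (S : H →L[ℂ] H) (hS : IsCompactOperator (⇑S))
    (hpos : 0 < ‖T - S‖) :
    spectrum ℂ S ⊆ ⋃ j, {z : ℂ | ‖z - l j‖ < 2 * ‖T - S‖} :=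
  spectrum_subset_union_balls_general φ T l hT S hpos
end

section
/- Let H be a complex Hilbert space and let L, K, T be bounded linear operators on H such that L and K are self-adjoint, L is coercive (there exists C > 0 with ⟨L v, v⟩ ≥ C‖v‖² for all v ∈ H), and L ∘ T = K. Then every generalized eigenvector of T is an eigenvector: for every λ ∈ ℂ, every integer m ≥ 1, and every u ∈ H, if (T − λ)^m u = 0 then T u = λ u. (Part 2 of Proposition 2.1: all generalized eigenvectors of T_t and T_{t,h} are eigenvectors, stated abstractly.) -/
open scoped InnerProductSpace

lemma gevec_key
    {H : Type*} [NormedAddCommGroup H] [InnerProductSpace ℂ H] [CompleteSpace H]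
    (L K T : H →L[ℂ] H)
    (hL : IsSelfAdjoint L) (hK : IsSelfAdjoint K)
    (hcoer : ∃ C : ℝ, 0 < C ∧ ∀ v : H, C * ‖v‖ ^ 2 ≤ (⟪L v, v⟫_ℂ).re)
    (hLT : L ∘L T = K) (lam : ℂ) (u w : H)
    (hw : w = T u - lam • u) (hTw : T w = lam • w) : w = 0 := by
  obtain ⟨C, hC, hco⟩ := hcoer
  by_contra hne
  have hLsym : ∀ x y : H, ⟪L x, y⟫_ℂ = ⟪x, L y⟫_ℂ := fun x y => hL.isSymmetric x y
  have hKsym : ∀ x y : H, ⟪K x, y⟫_ℂ = ⟪x, K y⟫_ℂ := fun x y => hK.isSymmetric x y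
  have hsym : ∀ x y : H, ⟪L (T x), y⟫_ℂ = ⟪L x, T y⟫_ℂ := by
    intro x y
    have h1 : L (T x) = K x := by
      have := congrArg (fun A : H →L[ℂ] H => A x) hLT
      simpa using this
    have h2 : L (T y) = K y := by
      have := congrArg (fun A : H →L[ℂ] H => A y) hLT
      simpa using this
    rw [h1, hKsym x y, ← h2, ← hLsym]
  have hpos : 0 < (⟪L w, w⟫_ℂ).re := by
    refine lt_of_lt_of_le ?_ (hco w)
    have : 0 < ‖w‖ := norm_pos_iff.mpr hne
    positivity
  have hLww_ne : ⟪L w, w⟫_ℂ ≠ 0 := fun h => by simp [h] at hpos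
  have hreal : (starRingEnd ℂ) lam = lam := by
    have h1 : ⟪L (T w), w⟫_ℂ = ⟪L w, T w⟫_ℂ := hsym w w
    rw [hTw] at h1
    rw [map_smul, inner_smul_left, inner_smul_right] at h1
    exact mul_right_cancel₀ hLww_ne h1
  have hmain : ⟪L w, w⟫_ℂ = 0 := by
    have h1 : ⟪L w, w⟫_ℂ = ⟪L (T u), w⟫_ℂ - (starRingEnd ℂ) lam * ⟪L u, w⟫_ℂ := by
      rw [hw, map_sub, inner_sub_left, map_smul, inner_smul_left]
    have h2 : ⟪L (T u), w⟫_ℂ = lam * ⟪L u, w⟫_ℂ := by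
      rw [hsym u w, hTw, inner_smul_right]
    rw [h1, h2, hreal, sub_self]
  rw [hmain] at hpos
  simp at hpos

/-- Part 2 of Proposition 2.1 (abstract form), generalized eigenvectors are eigenvectors:
if `L`, `K` are self-adjoint bounded operators on a complex Hilbert space, `L` is
coercive, and `L ∘ T = K`, then for every `λ ∈ ℂ`, every `m ≥ 1` and every `u`,
`(T - λ)^m u = 0` implies `T u = λ u`. -/
theorem generalized_eigenvector_is_eigenvector
    {H : Type*} [NormedAddCommGroup H] [InnerProductSpace ℂ H] [CompleteSpace H]
    (L K T : H →L[ℂ] H)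
    (hL : IsSelfAdjoint L) (hK : IsSelfAdjoint K)
    (hcoer : ∃ C : ℝ, 0 < C ∧ ∀ v : H, C * ‖v‖ ^ 2 ≤ (⟪L v, v⟫_ℂ).re)
    (hLT : L ∘L T = K) :
    ∀ (lam : ℂ) (m : ℕ) (u : H), 1 ≤ m →
      ((T - algebraMap ℂ (H →L[ℂ] H) lam) ^ m) u = 0 → T u = lam • u := by
  intro lam m
  set S : H →L[ℂ] H := T - algebraMap ℂ (H →L[ℂ] H) lam with hS
  have hSapp : ∀ v : H, S v = T v - lam • v := by
    intro v
    simp [hS, Algebra.algebraMap_eq_smul_one]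
  have key : ∀ v : H, S (S v) = 0 → S v = 0 := by
    intro v hv
    have hTw : T (S v) = lam • (S v) := by
      have := hSapp (S v)
      rw [hv] at this
      linear_combination (norm := module) -this
    exact gevec_key L K T hL hK hcoer hLT lam v (S v) (hSapp v) hTw
  have main : ∀ m : ℕ, 1 ≤ m → ∀ u : H, (S ^ m) u = 0 → S u = 0 := by
    intro m hm
    induction m with
    | zero => omega
    | succ n ih =>
      intro u hu
      rcases Nat.eq_or_lt_of_le hm with h1 | h1
      · rw [← h1, pow_one] at hu; exact hu
      · have hn : 1 ≤ n := by omega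
        have hSn : (S ^ n) (S u) = 0 := by
          rw [pow_succ, ContinuousLinearMap.mul_apply] at hu
          exact hu
        exact key u (ih hn (S u) hSn)
  intro u hm hu
  have := main m hm u hu
  rw [hSapp] at this
  linear_combination (norm := module) this
end
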